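/- For the unit square C = [0,1]², the edge-midpoint rule L(f) = (1/3)f(1/2,1/2) + (1/6)(f(1/2,0)+f(0,1/2)+f(1/2,1)+f(1,1/2)) satisfies L(f) = ∫∫_C f dA for every polynomial f(x,y) of total degree ≤ 3. -/
import Mathlib


open MeasureTheory MvPolynomial

/-- The unit square [0,1] × [0,1]. -/
def Csq : Set (Fin 2 → ℝ) := {v | ∀ i, v i ∈ Set.Icc (0:ℝ) 1}

lemma Csq_eq_Icc : Csq = Set.Icc (0 : Fin 2 → ℝ) 1 := by
  ext v
  simp [Csq, Set.mem_Icc, Pi.le_def, forall_and]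

lemma int_mono (a b : ℕ) :
    ∫ v in Csq, (v 0)^a * (v 1)^b = (1/(a+1) : ℝ) * (1/(b+1)) := by
  have hpre : Csq
      = (MeasurableEquiv.finTwoArrow : (Fin 2 → ℝ) ≃ᵐ ℝ × ℝ) ⁻¹'
        (Set.Icc 0 1 ×ˢ Set.Icc 0 1) := by
    ext v
    simp [Csq, MeasurableEquiv.finTwoArrow, Fin.forall_fin_two, Set.mem_prod, Prod.le_def]
    tauto
  have h : ∀ n : ℕ, ∫ x in Set.Icc (0:ℝ) 1, x ^ n = 1/(n+1) := by
    intro n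
    rw [integral_Icc_eq_integral_Ioc, ← intervalIntegral.integral_of_le (by norm_num),
      integral_pow]
    norm_num
  rw [hpre]
  have main := (volume_preserving_finTwoArrow ℝ).setIntegral_preimage_emb
      (MeasurableEquiv.finTwoArrow).measurableEmbedding
      (fun z : ℝ × ℝ => z.1 ^ a * z.2 ^ b) (Set.Icc 0 1 ×ˢ Set.Icc 0 1)
  refine main.trans ?_
  rw [show (volume : Measure (ℝ × ℝ)) = (volume : Measure ℝ).prod volume from rfl]
  rw [setIntegral_prod_mul (fun x : ℝ => x ^ a) (fun y : ℝ => y ^ b), h, h]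

lemma key (a b : ℕ) (h : a + b ≤ 3) (c : ℝ) :
    (1/3 : ℝ) * (c * ((1/2:ℝ)^a * (1/2:ℝ)^b))
      + (1/6 : ℝ) * (c * ((1/2:ℝ)^a * (0:ℝ)^b) + c * ((0:ℝ)^a * (1/2:ℝ)^b)
          + c * ((1/2:ℝ)^a * (1:ℝ)^b) + c * ((1:ℝ)^a * (1/2:ℝ)^b))
      = c * ((1/(a+1) : ℝ) * (1/(b+1))) := by
  have ha : a ≤ 3 := by omega
  interval_cases a <;> (have hb : b ≤ 3 := by omega) <;> interval_cases b <;>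
    first | (exfalso; omega) | (norm_num; try ring)

theorem stmt_4 (p : MvPolynomial (Fin 2) ℝ) (hp : p.totalDegree ≤ 3) :
    (1/3 : ℝ) * eval ![1/2, 1/2] p
      + (1/6 : ℝ) * (eval ![1/2, 0] p + eval ![0, 1/2] p + eval ![1/2, 1] p + eval ![1, 1/2] p)
      = ∫ v in Csq, eval v p := by
  have heval : ∀ x : Fin 2 → ℝ,
      eval x p = ∑ d ∈ p.support, coeff d p * (x 0 ^ d 0 * x 1 ^ d 1) := by
    intro x
    rw [eval_eq']
    exact Finset.sum_congr rfl fun d _ => by rw [Fin.prod_univ_two]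
  -- RHS
  have hrhs : ∫ v in Csq, eval v p
      = ∑ d ∈ p.support, coeff d p * ((1/(d 0 + 1) : ℝ) * (1/(d 1 + 1))) := by
    calc ∫ v in Csq, eval v p
        = ∫ v in Csq, ∑ d ∈ p.support, coeff d p * (v 0 ^ d 0 * v 1 ^ d 1) := by
          exact setIntegral_congr_fun (by rw [Csq_eq_Icc]; exact measurableSet_Icc)
            (fun v _ => heval v)
      _ = ∑ d ∈ p.support, ∫ v in Csq, coeff d p * (v 0 ^ d 0 * v 1 ^ d 1) := by
          refine integral_finset_sum _ fun d _ => ?_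
          rw [Csq_eq_Icc]
          exact (continuous_const.mul
            (((continuous_apply (0 : Fin 2)).pow _).mul
              ((continuous_apply (1 : Fin 2)).pow _))).integrableOn_Icc
      _ = ∑ d ∈ p.support, coeff d p * ((1/(d 0 + 1) : ℝ) * (1/(d 1 + 1))) := by
          refine Finset.sum_congr rfl fun d _ => ?_
          rw [MeasureTheory.integral_const_mul, int_mono]
  rw [hrhs, heval, heval, heval, heval, heval]
  simp only [Matrix.cons_val_zero, Matrix.cons_val_one, Matrix.head_cons]
  simp only [Finset.mul_sum, ← Finset.sum_add_distrib]
  refine Finset.sum_congr rfl fun d hd => ?_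
  have hdeg : d 0 + d 1 ≤ 3 := by
    have := MvPolynomial.le_totalDegree hd
    have hsum : (d.sum fun _ e => e) = d 0 + d 1 := by
      rw [Finsupp.sum_fintype _ _ (fun _ => rfl), Fin.sum_univ_two]
    omega
  exact key (d 0) (d 1) hdeg (coeff d p)
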